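/- Let n be a natural number and let a₁, a₂, a₃ be integers. Suppose the polynomial Q = a₁(s·t−1)² + a₂(s−1)² + a₃(t−1)² ∈ ℤ[s,t] can be written as a sum of n polynomials, each of the form ε₁m₁(s·t−1)² + ε₂m₂(t−1)² + ε₃m₃(s−1)² with each mᵢ ∈ {0,1,2} and each εᵢ ∈ {−1,1}. Then |a₁ + a₂| ≤ 4n; equivalently, n ≥ |a₁ + a₂|/4. -/
import Mathlib


open MvPolynomial

noncomputable def S : MvPolynomial (Fin 2) ℤ := X 0
noncomputable def T : MvPolynomial (Fin 2) ℤ := X 1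

/-- If `a₁(st-1)² + a₂(s-1)² + a₃(t-1)²` is a sum of `n` polynomials, each of the form
`ε₁m₁(st-1)² + ε₂m₂(t-1)² + ε₃m₃(s-1)²` with `mᵢ ∈ {0,1,2}` and `εᵢ ∈ {-1,1}`,
then `|a₁ + a₂| ≤ 4n`. -/
theorem stmt_8 (n : ℕ) (a₁ a₂ a₃ : ℤ)
    (m ε : Fin n → Fin 3 → ℤ)
    (hm : ∀ i j, m i j ∈ ({0, 1, 2} : Set ℤ))
    (hε : ∀ i j, ε i j ∈ ({-1, 1} : Set ℤ))
    (hQ : (a₁ : MvPolynomial (Fin 2) ℤ) * (S * T - 1) ^ 2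
        + (a₂ : MvPolynomial (Fin 2) ℤ) * (S - 1) ^ 2
        + (a₃ : MvPolynomial (Fin 2) ℤ) * (T - 1) ^ 2
      = ∑ i : Fin n,
          (((ε i 0 * m i 0 : ℤ) : MvPolynomial (Fin 2) ℤ) * (S * T - 1) ^ 2
            + ((ε i 1 * m i 1 : ℤ) : MvPolynomial (Fin 2) ℤ) * (T - 1) ^ 2
            + ((ε i 2 * m i 2 : ℤ) : MvPolynomial (Fin 2) ℤ) * (S - 1) ^ 2)) :
    |a₁ + a₂| ≤ 4 * n := by
  have h := congrArg (MvPolynomial.eval ![2, 1]) hQ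
  simp only [map_add, map_sum, map_mul, map_pow, map_sub, map_one, map_intCast,
    S, T, MvPolynomial.eval_X] at h
  norm_num [Matrix.cons_val_zero, Matrix.cons_val_one, Matrix.head_cons] at h
  rw [h]
  calc |∑ i : Fin n, (ε i 0 * m i 0 + ε i 2 * m i 2)|
      ≤ ∑ i : Fin n, |ε i 0 * m i 0 + ε i 2 * m i 2| := Finset.abs_sum_le_sum_abs _ _
    _ ≤ ∑ _i : Fin n, (4 : ℤ) := by
        apply Finset.sum_le_sum
        intro i _
        have h0 := hm i 0; have h2 := hm i 2
        have e0 := hε i 0; have e2 := hε i 2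
        simp only [Set.mem_insert_iff, Set.mem_singleton_iff] at h0 h2 e0 e2
        rcases h0 with h0|h0|h0 <;> rcases h2 with h2|h2|h2 <;>
          rcases e0 with e0|e0 <;> rcases e2 with e2|e2 <;>
          simp [h0, h2, e0, e2]
    _ = 4 * n := by simp [mul_comm]
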